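/- Let p be a prime and R a commutative ℚ-algebra. Let X, C ∈ R[[t]] with C having zero constant term and X = exp(C). Let U and V be the p-singular and p-regular parts of X, and let B be the p-regular part of C. Write ch_p(B) for the p-singular part of exp(B) (which has constant term 1, hence is invertible) and sh_p(B) for the p-regular part of exp(B). Then V·U^{-1} = sh_p(B)·ch_p(B)^{-1}; in particular the series Y = V·U^{-1} depends only on the p-regular part of C. -/

import Mathlib

/-!
Write `C = A + B` with `A` the `p`-singular and `B` the `p`-regular part of `C`. Then
`exp C = exp A · exp B`, and `exp A` is `p`-singular, so multiplying by it commutes with taking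
`p`-singular and `p`-regular parts. Hence `U = exp A · ch_p(B)` and `V = exp A · sh_p(B)`, and the
common unit factor `exp A` cancels from `V·U⁻¹`.

The identity `exp (A + B) = exp A · exp B` is checked modulo `X ^ N` for every `N`: there `A` and
`B` become nilpotent, `exp` becomes the exponential of nilpotent elements, and the identity is
`IsNilpotent.exp_add_of_commute`.
-/

open PowerSeries

/-- The `p`-singular part of a power series `F = Σ fₙ tⁿ`, namely `Σ_{p ∣ n} fₙ tⁿ`. -/
noncomputable def pSingularPart {R : Type*} [CommRing R] (p : ℕ) (F : PowerSeries R) :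
    PowerSeries R :=
  PowerSeries.mk fun n => if p ∣ n then PowerSeries.coeff n F else 0

/-- The `p`-regular part of a power series `F = Σ fₙ tⁿ`, namely `Σ_{p ∤ n} fₙ tⁿ`. -/
noncomputable def pRegularPart {R : Type*} [CommRing R] (p : ℕ) (F : PowerSeries R) :
    PowerSeries R :=
  PowerSeries.mk fun n => if p ∣ n then 0 else PowerSeries.coeff n F

/-- `exp C = Σ_{k≥0} Cᵏ/k!` for a power series `C` with zero constant term over a
commutative `ℚ`-algebra.  (When the constant term of `C` is zero, `coeff n (C ^ k) = 0`
for `k > n`, so the truncated sum below computes the full exponential.) -/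
noncomputable def psExp {R : Type*} [CommRing R] [Algebra ℚ R] (C : PowerSeries R) :
    PowerSeries R :=
  PowerSeries.mk fun n => ∑ k ∈ Finset.range (n + 1),
    ((k.factorial : ℚ)⁻¹) • PowerSeries.coeff n (C ^ k)

open Finset

namespace PowerSeries

section Singular

variable {R : Type*} [CommRing R] {p : ℕ}

def IsPSingular (p : ℕ) (S : R⟦X⟧) : Prop :=
  ∀ n, ¬p ∣ n → coeff n S = 0

theorem IsPSingular.one : IsPSingular p (1 : R⟦X⟧) := fun n hn => by
  rw [coeff_one, if_neg (by rintro rfl; exact hn (dvd_zero p))]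

theorem IsPSingular.mul {S T : R⟦X⟧} (hS : IsPSingular p S) (hT : IsPSingular p T) :
    IsPSingular p (S * T) := fun n hn => by
  rw [coeff_mul]
  refine sum_eq_zero fun x hx => ?_
  rw [HasAntidiagonal.mem_antidiagonal] at hx
  by_cases hi : p ∣ x.1
  · rw [hT x.2 fun hj => hn (hx ▸ dvd_add hi hj), mul_zero]
  · rw [hS x.1 hi, zero_mul]

theorem IsPSingular.pow {S : R⟦X⟧} (hS : IsPSingular p S) (k : ℕ) :
    IsPSingular p (S ^ k) := by
  induction k with
  | zero => rw [pow_zero]; exact .one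
  | succ k ih => rw [pow_succ]; exact ih.mul hS

theorem IsPSingular.psExp [Algebra ℚ R] {S : R⟦X⟧} (hS : IsPSingular p S) :
    IsPSingular p (psExp S) := fun n hn => by
  rw [_root_.psExp, coeff_mk]
  exact sum_eq_zero fun k _ => by rw [hS.pow k n hn, smul_zero]

variable (p)

theorem isPSingular_pSingularPart (F : R⟦X⟧) : IsPSingular p (pSingularPart p F) :=
  fun n hn => by rw [pSingularPart, coeff_mk, if_neg hn]

theorem pSingularPart_add_pRegularPart (F : R⟦X⟧) :
    pSingularPart p F + pRegularPart p F = F := by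
  ext n
  by_cases hn : p ∣ n <;> simp [pSingularPart, pRegularPart, hn]

theorem constantCoeff_pSingularPart (F : R⟦X⟧) :
    constantCoeff (pSingularPart p F) = constantCoeff F := by
  rw [← coeff_zero_eq_constantCoeff_apply, pSingularPart, coeff_mk, if_pos (dvd_zero p),
    coeff_zero_eq_constantCoeff_apply]

theorem constantCoeff_pRegularPart (F : R⟦X⟧) : constantCoeff (pRegularPart p F) = 0 := by
  rw [← coeff_zero_eq_constantCoeff_apply, pRegularPart, coeff_mk, if_pos (dvd_zero p)]

variable {p}

theorem IsPSingular.pSingularPart_mul {S : R⟦X⟧} (hS : IsPSingular p S) (F : R⟦X⟧) :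
    pSingularPart p (S * F) = S * pSingularPart p F := by
  ext n
  simp only [pSingularPart, coeff_mk, coeff_mul]
  split_ifs with hn
  · refine sum_congr rfl fun x hx => ?_
    rw [HasAntidiagonal.mem_antidiagonal] at hx
    by_cases hi : p ∣ x.1
    · rw [if_pos ((Nat.dvd_add_right hi).mp (hx ▸ hn))]
    · rw [hS x.1 hi, zero_mul, zero_mul]
  · refine (sum_eq_zero fun x hx => ?_).symm
    rw [HasAntidiagonal.mem_antidiagonal] at hx
    by_cases hi : p ∣ x.1
    · rw [if_neg fun hj => hn (hx ▸ dvd_add hi hj), mul_zero]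
    · rw [hS x.1 hi, zero_mul]

theorem IsPSingular.pRegularPart_mul {S : R⟦X⟧} (hS : IsPSingular p S) (F : R⟦X⟧) :
    pRegularPart p (S * F) = S * pRegularPart p F := by
  rw [eq_sub_of_add_eq' (pSingularPart_add_pRegularPart p (S * F)), hS.pSingularPart_mul,
    ← mul_sub, ← eq_sub_of_add_eq' (pSingularPart_add_pRegularPart p F)]

end Singular

theorem pow_mk_span_X_pow_eq_zero {R : Type*} [CommRing R] {C : R⟦X⟧}
    (hC : constantCoeff C = 0) (N : ℕ) : Ideal.Quotient.mk (Ideal.span {X ^ N}) C ^ N = 0 := by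
  rw [← map_pow, Ideal.Quotient.eq_zero_iff_mem, Ideal.mem_span_singleton]
  exact pow_dvd_pow_of_dvd (X_dvd_iff.mpr hC) N

section Exp

variable {R : Type*} [CommRing R] [Algebra ℚ R]

theorem constantCoeff_psExp (C : R⟦X⟧) : constantCoeff (psExp C) = 1 := by
  rw [← coeff_zero_eq_constantCoeff_apply, psExp, coeff_mk]
  simp

theorem X_pow_dvd_psExp_sub_sum {C : R⟦X⟧} (hC : constantCoeff C = 0) (N : ℕ) :
    X ^ N ∣ psExp C - ∑ k ∈ range N, (k.factorial : ℚ)⁻¹ • C ^ k := by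
  rw [X_pow_dvd_iff]
  intro n hn
  simp only [map_sub, map_sum, map_rat_smul, psExp, coeff_mk, sub_eq_zero]
  refine sum_subset (by simpa using hn) fun k _ hk => ?_
  have hnk : n < k := by simpa using hk
  rw [X_pow_dvd_iff.mp (pow_dvd_pow_of_dvd (X_dvd_iff.mpr hC) k) n hnk, smul_zero]

theorem mk_span_X_pow_psExp {C : R⟦X⟧} (hC : constantCoeff C = 0) (N : ℕ) :
    Ideal.Quotient.mk (Ideal.span {X ^ N}) (psExp C) =
      IsNilpotent.exp (Ideal.Quotient.mk (Ideal.span {X ^ N}) C) := by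
  rw [IsNilpotent.exp_eq_sum (pow_mk_span_X_pow_eq_zero hC N),
    Ideal.Quotient.eq.mpr (Ideal.mem_span_singleton.mpr (X_pow_dvd_psExp_sub_sum hC N))]
  simp only [map_sum, map_rat_smul, map_pow]

theorem psExp_add {A B : R⟦X⟧} (hA : constantCoeff A = 0) (hB : constantCoeff B = 0) :
    psExp (A + B) = psExp A * psExp B := by
  ext n
  have hAB : constantCoeff (A + B) = 0 := by rw [map_add, hA, hB, add_zero]
  have hmk : Ideal.Quotient.mk (Ideal.span {X ^ (n + 1)}) (psExp (A + B)) =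
      Ideal.Quotient.mk (Ideal.span {X ^ (n + 1)}) (psExp A * psExp B) := by
    rw [map_mul, mk_span_X_pow_psExp hA, mk_span_X_pow_psExp hB, mk_span_X_pow_psExp hAB,
      map_add, IsNilpotent.exp_add_of_commute (Commute.all _ _)
        ⟨_, pow_mk_span_X_pow_eq_zero hA _⟩ ⟨_, pow_mk_span_X_pow_eq_zero hB _⟩]
  have hdvd := Ideal.mem_span_singleton.mp (Ideal.Quotient.eq.mp hmk)
  rw [← sub_eq_zero, ← map_sub]
  exact X_pow_dvd_iff.mp hdvd n n.lt_succ_self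

end Exp

end PowerSeries

theorem stmt5_general (p : ℕ) (R : Type*) [CommRing R] [Algebra ℚ R]
    (C X Y Z : PowerSeries R)
    (hC : PowerSeries.constantCoeff C = 0)
    (hX : X = psExp C)
    (hY : Y * pSingularPart p X = pRegularPart p X)
    (hZ : Z * pSingularPart p (psExp (pRegularPart p C)) =
        pRegularPart p (psExp (pRegularPart p C))) :
    Y = Z := by
  set B := pRegularPart p C
  set E := psExp (pSingularPart p C)
  have hE : IsPSingular p E := (isPSingular_pSingularPart p C).psExp
  have hA : constantCoeff (pSingularPart p C) = 0 := by rw [constantCoeff_pSingularPart, hC]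
  have hXE : X = E * psExp B := by
    rw [hX, ← psExp_add hA (constantCoeff_pRegularPart p C), pSingularPart_add_pRegularPart]
  rw [hXE, hE.pSingularPart_mul, hE.pRegularPart_mul, ← hZ] at hY
  have hunit : IsUnit (E * pSingularPart p (psExp B)) := by
    rw [isUnit_iff_constantCoeff, map_mul, constantCoeff_psExp, constantCoeff_pSingularPart,
      constantCoeff_psExp, one_mul]
    exact isUnit_one
  exact hunit.mul_right_cancel (hY.trans (mul_left_comm _ _ _))

/-- let `X = exp C` with `C` of zero constant term, `U`,`V` the `p`-singular
and `p`-regular parts of `X`, and `B` the `p`-regular part of `C`.  Write `ch_p(B)` and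
`sh_p(B)` for the `p`-singular and `p`-regular parts of `exp B`.  Then
`V·U⁻¹ = sh_p(B)·ch_p(B)⁻¹` (both denominators have constant term 1, hence are invertible;
we express each quotient as the unique solution of the corresponding cross-multiplied
equation).  In particular `Y = V·U⁻¹` depends only on the `p`-regular part of `C`. -/
theorem stmt5 (p : ℕ) (hp : p.Prime) (R : Type*) [CommRing R] [Algebra ℚ R]
    (C X Y Z : PowerSeries R)
    (hC : PowerSeries.constantCoeff C = 0)
    (hX : X = psExp C)
    (hY : Y * pSingularPart p X = pRegularPart p X)
    (hZ : Z * pSingularPart p (psExp (pRegularPart p C)) =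
        pRegularPart p (psExp (pRegularPart p C))) :
    Y = Z :=
  stmt5_general p R C X Y Z hC hX hY hZ
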